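/- The language L = {0ⁿ1ⁿ : n ∈ ℕ} over Σ = {0,1} is not regular with advice: for every advice string A (over any finite advice alphabet) and every automaton with advice A, the accepted language differs from L. -/

import Mathlib

/-- The run of an automaton with advice. -/
def advRun {Q S Γ : Type*} (δ : Q → Γ → S → Q) (A : ℕ → Γ) : Q → ℕ → List S → Q
  | q, _, [] => q
  | q, n, a :: w => advRun δ A (δ q (A n) a) (n + 1) w

/-- The language accepted by an automaton with advice. -/
def advAccepts {Q S Γ : Type*} (δ : Q → Γ → S → Q) (A : ℕ → Γ) (q0 : Q) (F : Set Q) :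
    Set (List S) :=
  {w | advRun δ A q0 0 w ∈ F}

/-- The language `{0ⁿ1ⁿ : n ∈ ℕ}` over `{0,1}`, with `0 = false` and `1 = true`. -/
def zeroNoneN : Set (List Bool) :=
  {w | ∃ n : ℕ, w = List.replicate n false ++ List.replicate n true}

/-!
A `k`-state automaton with advice reaches at most `k` states after reading words of a fixed
length `n`, and since the advice it consults afterwards depends only on `n`, two words of length
`n` reaching the same state have the same left quotient in the accepted language. But the `k + 1`
words `0^(k+i) 1^(k-i)`, `i ≤ k`, all of length `2k`, have pairwise distinct left quotients in
`{0ⁿ1ⁿ}`: the suffix `1^(2i)` completes the `i`-th word, and no other.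
-/

open Function

section AdviceAutomaton

variable {Q S Γ : Type*} (δ : Q → Γ → S → Q) (A : ℕ → Γ)

theorem advRun_append (u v : List S) (q : Q) (n : ℕ) :
    advRun δ A q n (u ++ v) = advRun δ A (advRun δ A q n u) (n + u.length) v := by
  induction u generalizing q n with
  | nil => rfl
  | cons a u ih =>
    rw [List.cons_append, advRun, ih, List.length_cons, Nat.add_right_comm, Nat.add_assoc]
    rfl

theorem leftQuotient_advAccepts_eq_of_advRun_eq {q₀ : Q} {F : Set Q} {u v : List S}
    (hlen : u.length = v.length) (hrun : advRun δ A q₀ 0 u = advRun δ A q₀ 0 v) :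
    Language.leftQuotient (advAccepts δ A q₀ F) u =
      Language.leftQuotient (advAccepts δ A q₀ F) v := by
  ext w
  show advRun δ A q₀ 0 (u ++ w) ∈ F ↔ advRun δ A q₀ 0 (v ++ w) ∈ F
  rw [advRun_append, advRun_append, hlen, hrun]

theorem card_le_of_injective_leftQuotient_advAccepts [Fintype Q] {q₀ : Q} {F : Set Q}
    {ι : Type*} [Fintype ι] (f : ι → List S) (n : ℕ) (hlen : ∀ i, (f i).length = n)
    (hinj : Injective fun i => Language.leftQuotient (advAccepts δ A q₀ F) (f i)) :
    Fintype.card ι ≤ Fintype.card Q :=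
  Fintype.card_le_of_injective (fun i => advRun δ A q₀ 0 (f i)) fun i j hrun =>
    hinj (leftQuotient_advAccepts_eq_of_advRun_eq δ A ((hlen i).trans (hlen j).symm) hrun)

end AdviceAutomaton

theorem replicate_append_replicate_mem_zeroNoneN_iff (a b : ℕ) :
    List.replicate a false ++ List.replicate b true ∈ zeroNoneN ↔ a = b := by
  constructor
  · rintro ⟨n, hn⟩
    have hfalse := congrArg (List.count false) hn
    have htrue := congrArg (List.count true) hn
    simp only [List.count_append, List.count_replicate, BEq.rfl, beq_false, beq_true,
      Bool.not_true, Bool.false_eq_true, if_true, if_false, add_zero, zero_add] at hfalse htrue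
    omega
  · rintro rfl
    exact ⟨a, rfl⟩

theorem injective_leftQuotient_zeroNoneN (k : ℕ) :
    Injective fun i : Fin (k + 1) =>
      Language.leftQuotient zeroNoneN
        (List.replicate (k + i) false ++ List.replicate (k - i) true) := by
  intro i j hij
  have hmem : List.replicate (k + i) false ++ List.replicate (k - i) true ++
        List.replicate (2 * i) true ∈ zeroNoneN ↔
      List.replicate (k + j) false ++ List.replicate (k - j) true ++
        List.replicate (2 * i) true ∈ zeroNoneN :=
    Iff.of_eq (congrArg (List.replicate (2 * i) true ∈ ·) hij)
  simp only [List.append_assoc, ← List.replicate_add] at hmem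
  rw [replicate_append_replicate_mem_zeroNoneN_iff,
    replicate_append_replicate_mem_zeroNoneN_iff] at hmem
  have hi := i.is_le
  have hj := j.is_le
  exact Fin.ext (by omega)

/-- `{0ⁿ1ⁿ : n ∈ ℕ}` is not regular with advice: no automaton with any advice
string over any finite advice alphabet accepts it. -/
theorem zeroN_oneN_not_regular_with_advice :
    ∀ (Γ : Type) [Fintype Γ] (A : ℕ → Γ) (Q : Type) [Fintype Q]
      (δ : Q → Γ → Bool → Q) (q0 : Q) (F : Set Q),
      advAccepts δ A q0 F ≠ zeroNoneN := by
  intro Γ _ A Q _ δ q0 F h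
  have hcard := card_le_of_injective_leftQuotient_advAccepts δ A
    (fun i : Fin (Fintype.card Q + 1) =>
      List.replicate (Fintype.card Q + i) false ++ List.replicate (Fintype.card Q - i) true)
    (2 * Fintype.card Q)
    (fun i => by simp only [List.length_append, List.length_replicate]; omega)
    (h ▸ injective_leftQuotient_zeroNoneN _)
  simp only [Fintype.card_fin] at hcard
  omega
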